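/- arXiv:2002.11575 — 4 statements merged into one kernel-verified Lean document; each statement's English description precedes it below -/
import Mathlib

section
/- For any polynomial v of degree at most p on the interval (-1,1), the supremum norm of v is bounded by (p+1)/√2 times the L²(-1,1) norm of v. -/
/-!
Expand `v` in the Legendre polynomials `Pⱼ = (2ʲ j!)⁻¹ Dʲ (X² - 1)ʲ`. Integrating by parts against
`(x² - 1)ʲ` shows that they are orthogonal on `[-1, 1]` with `∫ Pⱼ² = 2 / (2j + 1)`, and the Legendre
equation gives `|Pⱼ| ≤ 1` there. By Cauchy–Schwarz,
`v(x)² ≤ (∑ⱼ (2j + 1) / 2 · Pⱼ(x)²) · ∫ v² ≤ (p + 1)² / 2 · ∫ v²`.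
-/

open MeasureTheory Polynomial Set
open scoped Nat

theorem Finset.sum_range_two_mul_add_one (m : ℕ) :
    ∑ j ∈ Finset.range m, (2 * j + 1 : ℝ) = m ^ 2 := by
  induction m with
  | zero => simp
  | succ m ih =>
    rw [Finset.sum_range_succ, ih]
    push_cast
    ring

theorem integral_sq_sub_one_pow_succ (n : ℕ) :
    (2 * n + 3 : ℝ) * ∫ x in (-1 : ℝ)..1, (x ^ 2 - 1) ^ (n + 1) =
      -((2 * n + 2) * ∫ x in (-1 : ℝ)..1, (x ^ 2 - 1) ^ n) := by
  have hF (x : ℝ) : HasDerivAt (fun x => x * (x ^ 2 - 1) ^ (n + 1))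
      ((2 * n + 3) * (x ^ 2 - 1) ^ (n + 1) + (2 * n + 2) * (x ^ 2 - 1) ^ n) x := by
    refine ((hasDerivAt_id' x).fun_mul
      (((hasDerivAt_pow 2 x).sub_const 1).fun_pow (n + 1))).congr_deriv ?_
    push_cast
    ring
  have hFTC := intervalIntegral.integral_eq_sub_of_hasDerivAt (a := -1) (b := 1)
    (fun x _ => hF x) (by apply Continuous.intervalIntegrable; fun_prop)
  rw [intervalIntegral.integral_add (by apply Continuous.intervalIntegrable; fun_prop)
      (by apply Continuous.intervalIntegrable; fun_prop),
    intervalIntegral.integral_const_mul, intervalIntegral.integral_const_mul] at hFTC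
  norm_num at hFTC
  linarith

theorem integral_sq_sub_one_pow (n : ℕ) :
    ∫ x in (-1 : ℝ)..1, (x ^ 2 - 1) ^ n =
      (-1) ^ n * 2 ^ (2 * n + 1) * (n ! : ℝ) ^ 2 / (2 * n + 1)! := by
  induction n with
  | zero => norm_num
  | succ n ih =>
    have h := integral_sq_sub_one_pow_succ n
    rw [ih] at h
    rw [show 2 * (n + 1) + 1 = 2 * n + 1 + 1 + 1 by ring, Nat.factorial_succ, Nat.factorial_succ,
      Nat.factorial_succ]
    have : (0 : ℝ) < (2 * n + 1)! := by positivity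
    push_cast
    field_simp
    field_simp at h
    linear_combination (2 * n + 2 : ℝ) * h

theorem le_max_of_mul_deriv_nonneg {f : ℝ → ℝ} (hf : Differentiable ℝ f)
    (hf' : ∀ x, 0 ≤ x * deriv f x) {a b x : ℝ} (hx : x ∈ Icc a b) :
    f x ≤ max (f a) (f b) := by
  rcases le_total 0 x with h0 | h0
  · have hmono : MonotoneOn f (Ici 0) :=
      monotoneOn_of_deriv_nonneg (convex_Ici 0) hf.continuous.continuousOn hf.differentiableOn
        fun t ht => nonneg_of_mul_nonneg_right (hf' t) (by simpa using ht)
    exact (hmono h0 (h0.trans hx.2) hx.2).trans (le_max_right _ _)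
  · have hanti : AntitoneOn f (Iic 0) :=
      antitoneOn_of_deriv_nonpos (convex_Iic 0) hf.continuous.continuousOn hf.differentiableOn
        fun t ht => nonpos_of_mul_nonneg_right (hf' t) (by simpa using ht)
    exact (hanti (hx.1.trans h0) h0 hx.1).trans (le_max_left _ _)

namespace Polynomial

theorem integral_derivative_mul_eval {a b : ℝ} {f : ℝ[X]} (ha : f.eval a = 0)
    (hb : f.eval b = 0) (g : ℝ[X]) :
    ∫ x in a..b, (derivative f).eval x * g.eval x =
      -∫ x in a..b, f.eval x * (derivative g).eval x := by
  rw [intervalIntegral.integral_mul_deriv_eq_deriv_mul (fun x _ => f.hasDerivAt x)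
    (fun x _ => g.hasDerivAt x) ((derivative f).continuous.intervalIntegrable a b)
    ((derivative g).continuous.intervalIntegrable a b), ha, hb]
  ring

theorem integral_iterate_derivative_mul_eval {a b : ℝ} {k : ℕ} {f : ℝ[X]}
    (hf : ∀ i < k, (derivative^[i] f).eval a = 0 ∧ (derivative^[i] f).eval b = 0) (g : ℝ[X]) :
    ∫ x in a..b, (derivative^[k] f).eval x * g.eval x =
      (-1) ^ k * ∫ x in a..b, f.eval x * (derivative^[k] g).eval x := by
  induction k generalizing f with
  | zero => simp
  | succ k ih =>
    obtain ⟨ha, hb⟩ : f.eval a = 0 ∧ f.eval b = 0 := hf 0 k.succ_pos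
    rw [Function.iterate_succ_apply, ih fun i hi => hf (i + 1) (by omega),
      integral_derivative_mul_eval ha hb, ← Function.iterate_succ_apply' derivative, pow_succ]
    ring

theorem eval_iterate_derivative_pow_eq_zero {R : Type*} [CommRing R] {q : R[X]} {x : R}
    (hq : q.IsRoot x) {n k : ℕ} (hk : k < n) : (derivative^[k] (q ^ n)).eval x = 0 := by
  obtain ⟨r, hr⟩ := pow_sub_dvd_iterate_derivative_pow q n k
  rw [hr, eval_mul, eval_pow, hq.eq_zero, zero_pow (by omega), zero_mul]

theorem monic_X_sq_sub_one_pow (n : ℕ) : ((X ^ 2 - 1 : ℝ[X]) ^ n).Monic :=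
  ((monic_X_pow 2).sub_of_left (by rw [degree_X_pow]; compute_degree!)).pow n

theorem natDegree_X_sq_sub_one_pow (n : ℕ) : ((X ^ 2 - 1 : ℝ[X]) ^ n).natDegree = 2 * n := by
  rw [natDegree_pow, show (X ^ 2 - 1 : ℝ[X]).natDegree = 2 by compute_degree!, mul_comm]

theorem coeff_X_sq_sub_one_pow_two_mul (n : ℕ) : ((X ^ 2 - 1 : ℝ[X]) ^ n).coeff (2 * n) = 1 := by
  rw [← natDegree_X_sq_sub_one_pow]
  exact monic_X_sq_sub_one_pow n

theorem iterate_derivative_two_mul_X_sq_sub_one_pow (n : ℕ) :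
    derivative^[2 * n] ((X ^ 2 - 1 : ℝ[X]) ^ n) = C ((2 * n)! : ℝ) := by
  ext m
  rw [coeff_iterate_derivative, coeff_C]
  rcases Nat.eq_zero_or_pos m with rfl | hm
  · simp [coeff_X_sq_sub_one_pow_two_mul, Nat.descFactorial_self]
  · rw [coeff_eq_zero_of_natDegree_lt (by rw [natDegree_X_sq_sub_one_pow]; omega)]
    simp [hm.ne']

theorem eval_iterate_derivative_X_sq_sub_one_pow {r : ℝ} (hr : r ^ 2 = 1) (n : ℕ) :
    (derivative^[n] ((X ^ 2 - 1 : ℝ[X]) ^ n)).eval r = n ! * (2 * r) ^ n := by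
  have hfac : (X ^ 2 - 1 : ℝ[X]) ^ n = (X - C r) ^ n * (X + C r) ^ n := by
    rw [← mul_pow, mul_comm, ← sq_sub_sq, ← C_pow, hr, C_1]
  have := aeval_iterate_derivative_self ((X ^ 2 - 1 : ℝ[X]) ^ n) n r (p' := (X + C r) ^ n)
    (by rw [Algebra.algebraMap_self, map_id, hfac])
  simpa [two_mul] using this

theorem integral_iterate_derivative_X_sq_sub_one_pow_mul (n : ℕ) (g : ℝ[X]) :
    ∫ x in (-1)..1, (derivative^[n] ((X ^ 2 - 1 : ℝ[X]) ^ n)).eval x * g.eval x =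
      (-1) ^ n * ∫ x in (-1)..1, (x ^ 2 - 1) ^ n * (derivative^[n] g).eval x := by
  rw [integral_iterate_derivative_mul_eval fun i hi =>
    ⟨eval_iterate_derivative_pow_eq_zero (by simp) hi,
      eval_iterate_derivative_pow_eq_zero (by simp) hi⟩]
  simp

theorem X_sq_sub_one_mul_derivative_X_sq_sub_one_pow (n : ℕ) :
    (X ^ 2 - 1 : ℝ[X]) * derivative ((X ^ 2 - 1) ^ n) = (2 * n : ℝ[X]) * X * (X ^ 2 - 1) ^ n := by
  rcases n with _ | n
  · simp
  · rw [derivative_pow, derivative_sub, derivative_X_pow, derivative_one]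
    simp only [C_eq_natCast, Nat.add_sub_cancel]
    push_cast
    ring

/-- Differentiating the previous identity `n + 1` times. -/
theorem X_sq_sub_one_mul_iterate_derivative_X_sq_sub_one_pow (n : ℕ) :
    (X ^ 2 - 1 : ℝ[X]) * derivative^[n + 2] ((X ^ 2 - 1) ^ n)
      + 2 * X * derivative^[n + 1] ((X ^ 2 - 1) ^ n)
      = (n * (n + 1) : ℝ[X]) * derivative^[n] ((X ^ 2 - 1) ^ n) := by
  set u : ℝ[X] := (X ^ 2 - 1) ^ n
  have hfirst : derivative^[2] u * X ^ 2 - derivative^[2] u + 2 • (derivative u * X) =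
      (2 * n) • u + (2 * n) • (derivative u * X) := by
    have := congrArg derivative (X_sq_sub_one_mul_derivative_X_sq_sub_one_pow n)
    simp only [derivative_mul, derivative_sub, derivative_X_pow, derivative_one, derivative_X,
      derivative_ofNat, derivative_natCast, Nat.cast_ofNat, map_ofNat] at this
    simp only [Function.iterate_succ, Function.iterate_zero, Function.comp_apply, id,
      nsmul_eq_mul]
    push_cast at this ⊢
    linear_combination this
  have hiter := congrArg (derivative^[n]) hfirst
  simp only [iterate_derivative_sub, iterate_map_add, iterate_derivative_smul,
    iterate_derivative_derivative_mul_X_sq, iterate_derivative_derivative_mul_X,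
    ← Function.iterate_add_apply] at hiter
  have hcast : ((n * (n - 1) : ℕ) : ℝ[X]) = n * n - n := by
    rcases n with _ | n
    · simp
    · push_cast; ring
  simp only [nsmul_eq_mul, hcast] at hiter
  push_cast at hiter
  linear_combination hiter

/-- `c y² + (1 - x²) y'²` has derivative `2 x y'²`, so on `[-1, 1]` it is largest at `±1`,
where it equals `c y²`. -/
theorem sq_eval_le_max_of_legendre_ode {y : ℝ[X]} {c : ℝ} (hc : 0 < c)
    (hy : (1 - X ^ 2) * derivative (derivative y) - 2 * X * derivative y + C c * y = 0)
    {x : ℝ} (hx : x ∈ Icc (-1) 1) :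
    y.eval x ^ 2 ≤ max (y.eval (-1) ^ 2) (y.eval 1 ^ 2) := by
  set G : ℝ[X] := C c * y ^ 2 + (1 - X ^ 2) * derivative y ^ 2
  have hG : derivative G = 2 * X * derivative y ^ 2 := by
    simp only [G, derivative_add, derivative_mul, derivative_C, derivative_sq, derivative_sub,
      derivative_one, derivative_X, zero_mul, zero_add, zero_sub, map_ofNat]
    linear_combination (2 * derivative y) * hy
  have hGx : G.eval x ≤ max (G.eval (-1)) (G.eval 1) := by
    refine le_max_of_mul_deriv_nonneg (f := fun x => G.eval x) G.differentiable
      (fun t => ?_) hx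
    rw [G.deriv, hG, eval_mul, eval_mul, eval_pow, eval_X, eval_ofNat]
    nlinarith [sq_nonneg (t * (derivative y).eval t)]
  have hcx : c * y.eval x ^ 2 ≤ G.eval x := by
    have : 0 ≤ 1 - x ^ 2 := by nlinarith [hx.1, hx.2]
    simp only [G, eval_add, eval_mul, eval_C, eval_pow, eval_sub, eval_one, eval_X]
    nlinarith [sq_nonneg ((derivative y).eval x)]
  have hG_endpoint (s : ℝ) (hs : s ^ 2 = 1) : G.eval s = c * y.eval s ^ 2 := by
    simp [G, hs]
  rw [hG_endpoint (-1) (by norm_num), hG_endpoint 1 (by norm_num),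
    ← mul_max_of_nonneg _ _ hc.le] at hGx
  exact le_of_mul_le_mul_left (hcx.trans hGx) hc

/-- Rodrigues' formula. -/
noncomputable def legendre (n : ℕ) : ℝ[X] :=
  C (2 ^ n * n ! : ℝ)⁻¹ * derivative^[n] ((X ^ 2 - 1) ^ n)

theorem degree_legendre (n : ℕ) : (legendre n).degree = n := by
  rw [legendre, degree_C_mul (by positivity)]
  refine degree_eq_of_le_of_coeff_ne_zero ?_ ?_
  · refine degree_le_natDegree.trans (Nat.cast_le.mpr ?_)
    grw [natDegree_iterate_derivative, natDegree_X_sq_sub_one_pow]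
    omega
  · rw [coeff_iterate_derivative, ← two_mul, coeff_X_sq_sub_one_pow_two_mul, nsmul_one]
    exact_mod_cast (Nat.descFactorial_pos.mpr (by omega)).ne'

theorem integral_legendre_mul_eq_zero {n : ℕ} {g : ℝ[X]} (hg : g.degree < n) :
    ∫ x in (-1)..1, (legendre n).eval x * g.eval x = 0 := by
  simp only [legendre, eval_mul, eval_C, mul_assoc, intervalIntegral.integral_const_mul,
    integral_iterate_derivative_X_sq_sub_one_pow_mul, iterate_derivative_eq_zero_of_degree_lt hg]
  simp

theorem integral_legendre_mul_legendre {i j : ℕ} (h : i ≠ j) :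
    ∫ x in (-1)..1, (legendre i).eval x * (legendre j).eval x = 0 := by
  rcases h.lt_or_gt with h | h
  · simp_rw [mul_comm ((legendre i).eval _)]
    exact integral_legendre_mul_eq_zero (by rw [degree_legendre]; exact_mod_cast h)
  · exact integral_legendre_mul_eq_zero (by rw [degree_legendre]; exact_mod_cast h)

theorem integral_legendre_sq (n : ℕ) :
    ∫ x in (-1)..1, (legendre n).eval x ^ 2 = 2 / (2 * n + 1) := by
  have hR := integral_iterate_derivative_X_sq_sub_one_pow_mul n
    (derivative^[n] ((X ^ 2 - 1 : ℝ[X]) ^ n))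
  rw [← Function.iterate_add_apply, ← two_mul, iterate_derivative_two_mul_X_sq_sub_one_pow] at hR
  simp only [eval_C, intervalIntegral.integral_mul_const, integral_sq_sub_one_pow] at hR
  simp only [legendre, eval_mul, eval_C, mul_pow, sq (eval _ (derivative^[n] _)),
    intervalIntegral.integral_const_mul, hR, Nat.factorial_succ]
  have : (0 : ℝ) < (2 * n)! := by positivity
  push_cast
  field_simp
  rw [← pow_mul, Even.neg_one_pow ⟨n, by ring⟩]
  ring

theorem legendre_eval_of_sq_eq_one {r : ℝ} (hr : r ^ 2 = 1) (n : ℕ) :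
    (legendre n).eval r = r ^ n := by
  rw [legendre, eval_mul, eval_C, eval_iterate_derivative_X_sq_sub_one_pow hr, mul_pow]
  field_simp

theorem legendre_ode (n : ℕ) :
    (1 - X ^ 2) * derivative (derivative (legendre n)) - 2 * X * derivative (legendre n)
      + C ((n : ℝ) * (n + 1)) * legendre n = 0 := by
  have h := X_sq_sub_one_mul_iterate_derivative_X_sq_sub_one_pow n
  rw [Function.iterate_succ_apply', Function.iterate_succ_apply'] at h
  simp only [legendre, derivative_C_mul, C_mul, C_add, C_1, C_eq_natCast]
  linear_combination (-C (2 ^ n * n ! : ℝ)⁻¹) * h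

theorem sq_legendre_eval_le_one (n : ℕ) {x : ℝ} (hx : x ∈ Icc (-1) 1) :
    (legendre n).eval x ^ 2 ≤ 1 := by
  rcases Nat.eq_zero_or_pos n with rfl | hn
  · simp [legendre]
  · refine (sq_eval_le_max_of_legendre_ode (by positivity) (legendre_ode n) hx).trans ?_
    simp [legendre_eval_of_sq_eq_one, ← pow_mul, pow_mul']

theorem exists_eq_sum_legendre {p : ℕ} {v : ℝ[X]} (hv : v.degree ≤ p) :
    ∃ a : ℕ → ℝ, v = ∑ j ∈ Finset.range (p + 1), a j • legendre j := by
  let S : Sequence ℝ := ⟨legendre, degree_legendre⟩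
  have hspan := S.span_degreeLT (m := p + 1) fun i _ =>
    (leadingCoeff_ne_zero.mpr (S.ne_zero i)).isUnit
  have hmem : v ∈ Submodule.span ℝ (legendre '' ↑(Finset.range (p + 1))) := by
    rw [Finset.coe_range]
    refine hspan ▸ mem_degreeLT.mpr (hv.trans_lt ?_)
    exact_mod_cast p.lt_succ_self
  obtain ⟨a, ha⟩ := (Submodule.mem_span_image_finset_iff_exists_fun' ℝ).mp hmem
  exact ⟨a, ha.symm⟩

theorem integral_sq_sum_eval_of_orthogonal {ι : Type*} {s : Finset ι} {P : ι → ℝ[X]} {a b : ℝ}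
    (horth : ∀ i ∈ s, ∀ j ∈ s, i ≠ j → ∫ x in a..b, (P i).eval x * (P j).eval x = 0)
    (c : ι → ℝ) :
    ∫ x in a..b, (∑ i ∈ s, c i * (P i).eval x) ^ 2 =
      ∑ i ∈ s, c i ^ 2 * ∫ x in a..b, (P i).eval x ^ 2 := by
  have hcont (i j : ι) : Continuous fun x => c i * (P i).eval x * (c j * (P j).eval x) :=
    ((P i).continuous.const_mul _).mul ((P j).continuous.const_mul _)
  simp_rw [sq, Finset.sum_mul_sum]
  rw [intervalIntegral.integral_finsetSum fun i _ =>
    (continuous_finsetSum s fun j _ => hcont i j).intervalIntegrable a b]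
  refine Finset.sum_congr rfl fun i hi => ?_
  rw [intervalIntegral.integral_finsetSum fun j _ => (hcont i j).intervalIntegrable a b,
    Finset.sum_eq_single i]
  · simp_rw [mul_mul_mul_comm, intervalIntegral.integral_const_mul]
  · intro j hj hji
    simp_rw [mul_mul_mul_comm, intervalIntegral.integral_const_mul, horth i hi j hj hji.symm,
      mul_zero]
  · exact absurd hi

theorem sq_eval_le_integral_sq {p : ℕ} {v : ℝ[X]} (hv : v.degree ≤ p) {x : ℝ}
    (hx : x ∈ Icc (-1) 1) :
    v.eval x ^ 2 ≤ (p + 1) ^ 2 / 2 * ∫ y in (-1)..1, v.eval y ^ 2 := by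
  obtain ⟨a, rfl⟩ := exists_eq_sum_legendre hv
  simp only [eval_finsetSum, eval_smul, smul_eq_mul]
  rw [integral_sq_sum_eval_of_orthogonal fun i _ j _ => integral_legendre_mul_legendre]
  simp only [integral_legendre_sq]
  calc (∑ j ∈ Finset.range (p + 1), a j * (legendre j).eval x) ^ 2
      ≤ (∑ j ∈ Finset.range (p + 1), (2 * j + 1) / 2 * (legendre j).eval x ^ 2) *
          ∑ j ∈ Finset.range (p + 1), a j ^ 2 * (2 / (2 * j + 1)) :=
        Finset.sum_sq_le_sum_mul_sum_of_sq_le_mul _ (fun j _ => by positivity)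
          (fun j _ => by positivity) fun j _ => by field_simp; rfl
    _ ≤ (∑ j ∈ Finset.range (p + 1), (2 * j + 1 : ℝ) / 2) *
          ∑ j ∈ Finset.range (p + 1), a j ^ 2 * (2 / (2 * j + 1)) := by
        gcongr with j
        exact mul_le_of_le_one_right (by positivity) (sq_legendre_eval_le_one j hx)
    _ = _ := by
        rw [← Finset.sum_div, Finset.sum_range_two_mul_add_one]
        push_cast
        rfl

end Polynomial

/-- For any polynomial `v` of degree at most `p` on the interval `(-1,1)`, the supremum norm
of `v` is bounded by `(p+1)/√2` times the `L²(-1,1)` norm of `v`. -/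
theorem polynomial_sup_le_L2 (p : ℕ) (v : Polynomial ℝ) (hdeg : v.degree ≤ p) :
    ∀ x ∈ Set.Icc (-1 : ℝ) 1,
      |v.eval x| ≤ (((p : ℝ) + 1) / Real.sqrt 2) *
        Real.sqrt (∫ y in (-1 : ℝ)..1, (v.eval y) ^ 2) := by
  intro x hx
  calc |v.eval x| ≤ √(((p : ℝ) + 1) ^ 2 / 2 * ∫ y in (-1 : ℝ)..1, (v.eval y) ^ 2) :=
        Real.abs_le_sqrt (sq_eval_le_integral_sq hdeg hx)
    _ = _ := by
        rw [Real.sqrt_mul (by positivity), Real.sqrt_div' _ zero_le_two,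
          Real.sqrt_sq (by positivity)]
end

section
/- If the problem is driven by initial conditions only (f = 0, homogeneous boundary data), the space–time DG solution satisfies the unconditional stability bound |(v_h, σ_h)|_DG ≤ (2‖c^{-1}v₀‖²_{L²(Ω)} + 2‖σ₀‖²_{L²(Ω)²})^{1/2}. -/
/-!
Testing the DG equation with the discrete solution itself and using coercivity gives
`|v|²_DG = ⟪u, w⟫`, where `u` is the initial datum and `w` the trace of `v` on `Ω × {0}`, both
viewed in the `L²` product space. The DG seminorm controls the trace, `‖w‖² ≤ 2 |v|²_DG`, so
Cauchy–Schwarz gives `|v|⁴_DG ≤ ‖u‖² ‖w‖² ≤ 2 ‖u‖² |v|²_DG`, and dividing by `|v|²_DG` yields the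
bound.
-/

open scoped RealInnerProductSpace

theorem sq_le_mul_norm_sq_of_sq_le_inner {E : Type*} [NormedAddCommGroup E]
    [InnerProductSpace ℝ E] {u w : E} {d κ : ℝ} (hκ : 0 ≤ κ)
    (h : d ^ 2 ≤ ⟪u, w⟫) (hw : ‖w‖ ^ 2 ≤ κ * d ^ 2) :
    d ^ 2 ≤ κ * ‖u‖ ^ 2 := by
  have hcs : d ^ 2 ≤ ‖u‖ * ‖w‖ := h.trans (real_inner_le_norm u w)
  have hd4 : d ^ 2 * d ^ 2 ≤ κ * ‖u‖ ^ 2 * d ^ 2 :=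
    calc d ^ 2 * d ^ 2 ≤ (‖u‖ * ‖w‖) ^ 2 := by rw [← sq]; gcongr
      _ = ‖u‖ ^ 2 * ‖w‖ ^ 2 := mul_pow _ _ _
      _ ≤ ‖u‖ ^ 2 * (κ * d ^ 2) := by gcongr
      _ = κ * ‖u‖ ^ 2 * d ^ 2 := by ring
  rcases (sq_nonneg d).eq_or_lt with hd | hd
  · rw [← hd]; positivity
  · exact le_of_mul_le_mul_right hd4 hd

theorem dg_unconditional_stability_general {V H1 H2 : Type*}
    [NormedAddCommGroup H1] [InnerProductSpace ℝ H1]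
    [NormedAddCommGroup H2] [InnerProductSpace ℝ H2]
    (A : V → V → ℝ) (dg : V → ℝ)
    (t0 : V → H1) (s0 : V → H2) (a : H1) (b : H2)
    (hsem : ∀ w, (1/2) * ‖t0 w‖^2 + (1/2) * ‖s0 w‖^2 ≤ (dg w)^2)
    (vh : V)
    (hcoer : A vh vh = (dg vh)^2)
    (heq : A vh vh = ⟪a, t0 vh⟫ + ⟪b, s0 vh⟫) :
    dg vh ≤ Real.sqrt (2 * ‖a‖^2 + 2 * ‖b‖^2) := by
  set u : WithLp 2 (H1 × H2) := WithLp.toLp 2 (a, b)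
  set w : WithLp 2 (H1 × H2) := WithLp.toLp 2 (t0 vh, s0 vh)
  have henergy : dg vh ^ 2 ≤ ⟪u, w⟫ := by
    rw [WithLp.prod_inner_apply, ← hcoer, heq]
  have htrace : ‖w‖ ^ 2 ≤ 2 * dg vh ^ 2 := by
    rw [WithLp.prod_norm_sq_eq_of_L2]
    change ‖t0 vh‖ ^ 2 + ‖s0 vh‖ ^ 2 ≤ _
    linarith [hsem vh]
  have hu : ‖u‖ ^ 2 = ‖a‖ ^ 2 + ‖b‖ ^ 2 := WithLp.prod_norm_sq_eq_of_L2 u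
  apply Real.le_sqrt_of_sq_le
  linarith [sq_le_mul_norm_sq_of_sq_le_inner zero_le_two henergy htrace]

/-- Unconditional stability of the space–time DG scheme for problems driven by initial
conditions only (`f = 0`, homogeneous boundary data): the DG solution satisfies
`|(v_h,σ_h)|_DG ≤ (2‖c⁻¹v₀‖² + 2‖σ₀‖²)^{1/2}`.

Here: `dg` is the DG seminorm; `t0, s0` map a discrete field to its (`c⁻¹`-weighted) scalar
trace and its vector trace on `Ω × {0}`, viewed in abstract `L²`-type real inner product
spaces `H1, H2`; `a = c⁻¹v₀` and `b = σ₀` are the initial data; `hsem` records that the DG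
seminorm contains the terms `½‖c⁻¹w‖²_{L²(F⁰)} + ½‖τ‖²_{L²(F⁰)}`; `hcoer` is the coercivity
identity `A_DG(v_h,σ_h;v_h,σ_h) = |(v_h,σ_h)|²_DG`; `heq` is the DG equation tested with the
discrete solution itself, with `ℓ(w,τ) = ∫_{Ω×{0}} (c⁻²v₀w + σ₀·τ)`. -/
theorem dg_unconditional_stability {V H1 H2 : Type*}
    [NormedAddCommGroup H1] [InnerProductSpace ℝ H1]
    [NormedAddCommGroup H2] [InnerProductSpace ℝ H2]
    (A : V → V → ℝ) (dg : V → ℝ) (hdg : ∀ w, 0 ≤ dg w)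
    (t0 : V → H1) (s0 : V → H2) (a : H1) (b : H2)
    (hsem : ∀ w, (1/2) * ‖t0 w‖^2 + (1/2) * ‖s0 w‖^2 ≤ (dg w)^2)
    (vh : V)
    (hcoer : A vh vh = (dg vh)^2)
    (heq : A vh vh = ⟪a, t0 vh⟫ + ⟪b, s0 vh⟫) :
    dg vh ≤ Real.sqrt (2 * ‖a‖^2 + 2 * ‖b‖^2) :=
  dg_unconditional_stability_general A dg t0 s0 a b hsem vh hcoer heq
end

section
/- Peetre–Tartar lemma: let X, Y, Z be Banach spaces, A : X → Y a continuous injective linear map, T : X → Z a compact linear map, and suppose ‖x‖_X ≤ C(‖Ax‖_Y + ‖Tx‖_Z) for all x ∈ X; then there exists C' > 0 with ‖x‖_X ≤ C'‖Ax‖_Y for all x ∈ X. -/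
/-! If no `C'` works, normalizing gives unit vectors `uₙ` with `A uₙ → 0`. Compactness of `T`
yields a subsequence along which `T uₙ` is Cauchy, and the a priori bound, applied to
differences, makes `uₙ` itself Cauchy along it. Its limit `w` has `‖w‖ = 1` and `A w = 0`,
contradicting injectivity. -/

open Filter Topology

section

variable {𝕜 X Y Z : Type*} [RCLike 𝕜]
  [NormedAddCommGroup X] [NormedSpace 𝕜 X]
  [NormedAddCommGroup Y] [NormedSpace 𝕜 Y]
  [NormedAddCommGroup Z] [NormedSpace 𝕜 Z]

theorem ContinuousLinearMap.exists_norm_eq_one_tendsto_zero_of_not_bounded_below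
    (A : X →L[𝕜] Y) (h : ¬∃ C > 0, ∀ x, ‖x‖ ≤ C * ‖A x‖) :
    ∃ u : ℕ → X, (∀ n, ‖u n‖ = 1) ∧ Tendsto (fun n => A (u n)) atTop (𝓝 0) := by
  push Not at h
  choose x hx using fun n : ℕ => h ((n : ℝ) + 1) n.cast_add_one_pos
  have hx0 : ∀ n, 0 < ‖x n‖ := fun n => (hx n).trans_le' (by positivity)
  refine ⟨fun n => (‖x n‖⁻¹ : 𝕜) • x n, fun n => ?_, ?_⟩
  · simp [norm_smul, (hx0 n).ne']
  · rw [tendsto_zero_iff_norm_tendsto_zero]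
    refine squeeze_zero (fun _ => norm_nonneg _) (fun n => ?_)
      tendsto_one_div_add_atTop_nhds_zero_nat
    rw [map_smul, norm_smul, norm_inv, RCLike.norm_ofReal, abs_norm, inv_mul_le_iff₀ (hx0 n),
      mul_one_div, le_div_iff₀ n.cast_add_one_pos, mul_comm]
    exact (hx n).le

theorem IsCompactOperator.exists_strictMono_cauchySeq {T : X →L[𝕜] Z}
    (hT : IsCompactOperator T) {u : ℕ → X} {r : ℝ} (hu : ∀ n, ‖u n‖ ≤ r) :
    ∃ φ : ℕ → ℕ, StrictMono φ ∧ CauchySeq (fun n => T (u (φ n))) := by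
  obtain ⟨K, hK, hTK⟩ := hT.image_closedBall_subset_compact r
  obtain ⟨_, -, φ, hφ, hlim⟩ :=
    hK.tendsto_subseq fun n => hTK ⟨u n, mem_closedBall_zero_iff.2 (hu n), rfl⟩
  exact ⟨φ, hφ, hlim.cauchySeq⟩

theorem cauchySeq_of_norm_le_mul_add (A : X →L[𝕜] Y) (T : X →L[𝕜] Z) {C : ℝ}
    (hbound : ∀ x, ‖x‖ ≤ C * (‖A x‖ + ‖T x‖)) {u : ℕ → X}
    (hAu : CauchySeq fun n => A (u n)) (hTu : CauchySeq fun n => T (u n)) : CauchySeq u := by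
  rw [cauchySeq_iff_tendsto_dist_atTop_0] at *
  refine squeeze_zero (fun _ => dist_nonneg) (fun p => ?_)
    (by simpa using (hAu.add hTu).const_mul C)
  simpa [dist_eq_norm] using hbound (u p.1 - u p.2)

end

theorem peetre_tartar_general
    {X Y Z : Type*}
    [NormedAddCommGroup X] [NormedSpace ℝ X] [CompleteSpace X]
    [NormedAddCommGroup Y] [NormedSpace ℝ Y]
    [NormedAddCommGroup Z] [NormedSpace ℝ Z]
    (A : X →L[ℝ] Y) (T : X →L[ℝ] Z)
    (hA : Function.Injective A) (hT : IsCompactOperator T)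
    (C : ℝ) (hbound : ∀ x, ‖x‖ ≤ C * (‖A x‖ + ‖T x‖)) :
    ∃ C' > 0, ∀ x, ‖x‖ ≤ C' * ‖A x‖ := by
  by_contra h
  obtain ⟨u, hu1, hAu⟩ := A.exists_norm_eq_one_tendsto_zero_of_not_bounded_below h
  obtain ⟨φ, hφ, hTu⟩ := hT.exists_strictMono_cauchySeq fun n => (hu1 n).le
  have hAuφ := hAu.comp hφ.tendsto_atTop
  obtain ⟨w, hw⟩ := cauchySeq_tendsto_of_complete
    (cauchySeq_of_norm_le_mul_add A T hbound hAuφ.cauchySeq hTu)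
  have hw1 : ‖w‖ = 1 := tendsto_nhds_unique hw.norm (by simp [hu1])
  have hAw : A w = 0 := tendsto_nhds_unique ((A.continuous.tendsto w).comp hw) hAuφ
  simp [hA (hAw.trans (map_zero A).symm)] at hw1

/-- Peetre–Tartar lemma: if `X, Y, Z` are Banach spaces, `A : X → Y` is a continuous
injective linear map, `T : X → Z` is a compact linear operator, and
`‖x‖ ≤ C(‖Ax‖ + ‖Tx‖)` for all `x`, then there is `C' > 0` with `‖x‖ ≤ C'‖Ax‖` for all `x`. -/
theorem peetre_tartar
    {X Y Z : Type*}
    [NormedAddCommGroup X] [NormedSpace ℝ X] [CompleteSpace X]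
    [NormedAddCommGroup Y] [NormedSpace ℝ Y] [CompleteSpace Y]
    [NormedAddCommGroup Z] [NormedSpace ℝ Z] [CompleteSpace Z]
    (A : X →L[ℝ] Y) (T : X →L[ℝ] Z)
    (hA : Function.Injective A) (hT : IsCompactOperator T)
    (C : ℝ) (hbound : ∀ x, ‖x‖ ≤ C * (‖A x‖ + ‖T x‖)) :
    ∃ C' > 0, ∀ x, ‖x‖ ≤ C' * ‖A x‖ :=
  peetre_tartar_general A T hA hT C hbound
end

section
/- Uniqueness for the homogeneous discrete problem: if (v_h, σ_h) is an elementwise-polynomial field on the space–time mesh whose DG seminorm vanishes, |(v_h,σ_h)|_DG = 0, and which satisfies ∇v_h + ∂ₜσ_h = 0 and ∇·σ_h + c^{-2}∂ₜv_h = 0 in each space–time element, then (v_h, σ_h) ≡ 0 in Q = Ω × (0,T). -/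
/-!
On each space–time element the fields are polynomials `P`, `Q` (time is the last variable) that
solve the first-order wave system identically. If their traces vanish at the bottom time `a` on a
nonempty open set of points, then so do the traces of `∂ₜP`, `∂ₜQ`: the spatial derivatives of a
vanishing trace vanish, and the system expresses `∂ₜ` through them (here `c > 0` is needed).
Since `(∂ₜP, ∂ₜQ)` solves the same system and has lower degree in `t`, induction on that degree
shows `∂ₜP = ∂ₜQ = 0`, so `P`, `Q` are constant in time and hence zero. In the first slab the
bottom traces vanish by the initial condition; in a later slab they vanish on the overlap of an
element with an element of the previous slab, which is open and nonempty because the previous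
elements are dense, by the vanishing time jumps. Induction over the slabs concludes.
-/

open Filter Topology

namespace MvPolynomial

theorem pderiv_comm {R σ : Type*} [CommSemiring R] (i j : σ) (p : MvPolynomial σ R) :
    pderiv i (pderiv j p) = pderiv j (pderiv i p) := by
  classical
  have hX : ∀ a b k : σ, pderiv a (pderiv b (X k : MvPolynomial σ R)) = 0 := fun a b k => by
    rw [pderiv_X]; rcases eq_or_ne b k with rfl | h <;> simp [*]
  induction p using MvPolynomial.induction_on with
  | C a => simp
  | add p q hp hq => simp [hp, hq]
  | mul_X p k hp =>
    simp only [pderiv_mul, map_add, hp, hX, mul_zero]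
    ring

theorem coeff_iterate_pderiv {R σ : Type*} [CommSemiring R] (i : σ) (n : ℕ)
    (p : MvPolynomial σ R) (m : σ →₀ ℕ) :
    ∃ c : R, coeff m ((pderiv i)^[n] p) = coeff (m + Finsupp.single i n) p * c := by
  induction n generalizing p with
  | zero => exact ⟨1, by simp⟩
  | succ n ih =>
    obtain ⟨c, hc⟩ := ih (pderiv i p)
    refine ⟨(((m + Finsupp.single i n) i : ℕ) + 1 : R) * c, ?_⟩
    rw [Function.iterate_succ_apply, hc, coeff_pderiv, add_assoc, ← Finsupp.single_add, mul_assoc]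

theorem iterate_pderiv_eq_zero_of_degreeOf_lt {R σ : Type*} [CommSemiring R] {i : σ}
    {p : MvPolynomial σ R} {n : ℕ} (h : degreeOf i p < n) : (pderiv i)^[n] p = 0 := by
  ext m
  obtain ⟨c, hc⟩ := coeff_iterate_pderiv i n p m
  rw [hc, coeff_zero, notMem_support_iff.1 fun hm => ?_, zero_mul]
  have := monomial_le_degreeOf i hm
  simp at this
  omega

theorem hasFDerivAt_eval {σ : Type*} [Fintype σ] (P : MvPolynomial σ ℝ) (x : σ → ℝ) :
    HasFDerivAt (fun y => eval y P)
      (∑ i, eval x (pderiv i P) • (ContinuousLinearMap.proj i : (σ → ℝ) →L[ℝ] ℝ)) x := by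
  classical
  induction P using MvPolynomial.induction_on with
  | C a =>
    simp only [eval_C, pderiv_C, map_zero, zero_smul, Finset.sum_const_zero]
    exact hasFDerivAt_const _ _
  | add p q hp hq =>
    simp only [map_add, add_smul, Finset.sum_add_distrib]
    exact hp.add hq
  | mul_X p k hp =>
    simp only [map_mul, eval_X]
    refine (hp.mul (hasFDerivAt_apply k x)).congr_fderiv ?_
    ext w
    simp [pderiv_X, Pi.single_apply, add_mul, Finset.sum_add_distrib, apply_ite, Finset.mul_sum,
      mul_assoc]

theorem eq_zero_of_eval_eq_zero_on_isOpen {σ : Type*} [Fintype σ] {P : MvPolynomial σ ℝ}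
    {U : Set (σ → ℝ)} (hU : IsOpen U) (hne : U.Nonempty) (h : ∀ y ∈ U, eval y P = 0) :
    P = 0 := by
  obtain ⟨z, hz⟩ := hne
  obtain ⟨ε, hε, hball⟩ := Metric.isOpen_iff.1 hU z hz
  refine funext_set (fun i => Metric.ball (z i) ε)
    (fun i => infinite_of_mem_nhds (z i) (Metric.ball_mem_nhds _ hε)) fun y hy => ?_
  rw [map_zero, h y (hball ((ball_pi z hε).symm ▸ hy))]

variable {d : ℕ}

theorem hasDerivAt_eval_snoc (P : MvPolynomial (Fin (d + 1)) ℝ) (x : Fin d → ℝ) (r : ℝ) :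
    HasDerivAt (fun s => eval (Fin.snoc x s) P)
      (eval (Fin.snoc x r) (pderiv (Fin.last d) P)) r := by
  have hsnoc : HasDerivAt (fun s : ℝ => (Fin.snoc x s : Fin (d + 1) → ℝ))
      (Pi.single (Fin.last d) 1) r := by
    refine hasDerivAt_pi.2 fun i => ?_
    induction i using Fin.lastCases with
    | last => simpa using hasDerivAt_id' r
    | cast j => simpa using hasDerivAt_const r (x j)
  refine ((hasFDerivAt_eval P _).comp_hasDerivAt r hsnoc).congr_deriv ?_
  simp [Pi.single_apply]

theorem fderiv_eval_snoc_apply_single (P : MvPolynomial (Fin (d + 1)) ℝ) (s : ℝ)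
    (x : Fin d → ℝ) (k : Fin d) :
    fderiv ℝ (fun y => eval (Fin.snoc y s) P) x (Pi.single k 1) =
      eval (Fin.snoc x s) (pderiv k.castSucc P) := by
  set L : (Fin d → ℝ) →L[ℝ] Fin (d + 1) → ℝ := ContinuousLinearMap.pi
    (Fin.snoc (α := fun _ => (Fin d → ℝ) →L[ℝ] ℝ) ContinuousLinearMap.proj 0)
  have hsnoc : HasFDerivAt (fun y : Fin d → ℝ => (Fin.snoc y s : Fin (d + 1) → ℝ)) L x := by
    refine hasFDerivAt_pi.2 fun i => ?_
    induction i using Fin.lastCases with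
    | last => simpa using hasFDerivAt_const s x
    | cast j => simpa using hasFDerivAt_apply j x
  have h : HasFDerivAt (fun y => eval (Fin.snoc y s) P) _ x := (hasFDerivAt_eval P _).comp x hsnoc
  rw [h.fderiv]
  simp [L, Fin.sum_univ_castSucc, Pi.single_apply]

theorem fderiv_apply_single_of_eqOn_eval_snoc {K : Set (Fin d → ℝ)} (hK : IsOpen K) {s : ℝ}
    {f : (Fin d → ℝ) → ℝ} {P : MvPolynomial (Fin (d + 1)) ℝ}
    (hf : ∀ y ∈ K, f y = eval (Fin.snoc y s) P) {x : Fin d → ℝ} (hx : x ∈ K) (k : Fin d) :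
    fderiv ℝ f x (Pi.single k 1) = eval (Fin.snoc x s) (pderiv k.castSucc P) := by
  have hfx : f =ᶠ[𝓝 x] fun y => eval (Fin.snoc y s) P := eventually_of_mem (hK.mem_nhds hx) hf
  rw [hfx.fderiv_eq, fderiv_eval_snoc_apply_single]

theorem deriv_of_eqOn_eval_snoc {T : Set ℝ} (hT : IsOpen T) {x : Fin d → ℝ} {g : ℝ → ℝ}
    {P : MvPolynomial (Fin (d + 1)) ℝ} (hg : ∀ r ∈ T, g r = eval (Fin.snoc x r) P) {s : ℝ}
    (hs : s ∈ T) : deriv g s = eval (Fin.snoc x s) (pderiv (Fin.last d) P) := by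
  have hgs : g =ᶠ[𝓝 s] fun r => eval (Fin.snoc x r) P := eventually_of_mem (hT.mem_nhds hs) hg
  rw [hgs.deriv_eq, (hasDerivAt_eval_snoc P x s).deriv]

theorem eq_zero_of_eval_snoc_eq_zero {P : MvPolynomial (Fin (d + 1)) ℝ}
    {K : Set (Fin d → ℝ)} {T : Set ℝ} (hK : IsOpen K) (hT : IsOpen T) (hKne : K.Nonempty)
    (hTne : T.Nonempty) (h : ∀ x ∈ K, ∀ s ∈ T, eval (Fin.snoc x s) P = 0) : P = 0 := by
  obtain ⟨x, hx⟩ := hKne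
  obtain ⟨s, hs⟩ := hTne
  refine eq_zero_of_eval_eq_zero_on_isOpen (U := Fin.init ⁻¹' K ∩ (· (Fin.last d)) ⁻¹' T) ?_
    ⟨Fin.snoc x s, by simpa using ⟨hx, hs⟩⟩ fun y hy => ?_
  · exact (hK.preimage (continuous_pi fun i => continuous_apply _)).inter
      (hT.preimage (continuous_apply _))
  · simpa [Fin.snoc_init_self] using h _ hy.1 _ hy.2

end MvPolynomial

open MvPolynomial

variable {d : ℕ}

structure IsWaveSolution (γ : ℝ) (R : MvPolynomial (Fin (d + 1)) ℝ)
    (S : Fin d → MvPolynomial (Fin (d + 1)) ℝ) : Prop where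
  grad : ∀ k, pderiv k.castSucc R + pderiv (Fin.last d) (S k) = 0
  div : ∑ k, pderiv k.castSucc (S k) + C γ * pderiv (Fin.last d) R = 0

def TraceVanishes (U : Set (Fin d → ℝ)) (a : ℝ) (R : MvPolynomial (Fin (d + 1)) ℝ) : Prop :=
  ∀ x ∈ U, eval (Fin.snoc x a) R = 0

namespace TraceVanishes

variable {U : Set (Fin d → ℝ)} {a : ℝ} {R : MvPolynomial (Fin (d + 1)) ℝ}

theorem pderiv_castSucc (hU : IsOpen U) (h : TraceVanishes U a R) (k : Fin d) :
    TraceVanishes U a (pderiv k.castSucc R) := fun x hx => by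
  rw [← fderiv_apply_single_of_eqOn_eval_snoc (f := fun _ => 0) hU (fun y hy => (h y hy).symm) hx]
  simp

theorem eq_zero_of_pderiv_last_eq_zero (hU : IsOpen U) (hne : U.Nonempty)
    (h : TraceVanishes U a R) (hR : pderiv (Fin.last d) R = 0) : R = 0 := by
  refine eq_zero_of_eval_snoc_eq_zero hU isOpen_univ hne Set.univ_nonempty fun x hx s _ => ?_
  have hderiv (r : ℝ) : HasDerivAt (fun s => eval (Fin.snoc x s) R) 0 r := by
    simpa [hR] using hasDerivAt_eval_snoc R x r
  rw [← h x hx]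
  exact is_const_of_deriv_eq_zero (fun r => (hderiv r).differentiableAt)
    (fun r => (hderiv r).deriv) s a

end TraceVanishes

namespace IsWaveSolution

variable {γ : ℝ} {R : MvPolynomial (Fin (d + 1)) ℝ} {S : Fin d → MvPolynomial (Fin (d + 1)) ℝ}

theorem pderiv_last (h : IsWaveSolution γ R S) :
    IsWaveSolution γ (pderiv (Fin.last d) R) fun k => pderiv (Fin.last d) (S k) where
  grad k := by simpa [pderiv_comm (Fin.last d)] using congrArg (pderiv (Fin.last d)) (h.grad k)
  div := by
    simpa [pderiv_comm (Fin.last d), pderiv_C_mul] using congrArg (pderiv (Fin.last d)) h.div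

theorem traceVanishes_pderiv_last {U : Set (Fin d → ℝ)} {a : ℝ} (hγ : γ ≠ 0) (hU : IsOpen U)
    (h : IsWaveSolution γ R S) (hR : TraceVanishes U a R) (hS : ∀ k, TraceVanishes U a (S k)) :
    TraceVanishes U a (pderiv (Fin.last d) R) ∧
      ∀ k, TraceVanishes U a (pderiv (Fin.last d) (S k)) := by
  refine ⟨fun x hx => ?_, fun k x hx => ?_⟩
  · have := congrArg (eval (Fin.snoc x a)) h.div
    simp only [map_add, map_sum, map_mul, eval_C, map_zero,
      fun k => (hS k).pderiv_castSucc hU k x hx, Finset.sum_const_zero, zero_add] at this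
    exact (mul_eq_zero.1 this).resolve_left hγ
  · have := congrArg (eval (Fin.snoc x a)) (h.grad k)
    simpa [hR.pderiv_castSucc hU k x hx] using this

theorem eq_zero_of_iterate_pderiv_last_eq_zero {U : Set (Fin d → ℝ)} {a : ℝ} (hγ : γ ≠ 0)
    (hU : IsOpen U) (hne : U.Nonempty) (n : ℕ) (hRn : (pderiv (Fin.last d))^[n] R = 0)
    (hSn : ∀ k, (pderiv (Fin.last d))^[n] (S k) = 0) (h : IsWaveSolution γ R S)
    (hR : TraceVanishes U a R) (hS : ∀ k, TraceVanishes U a (S k)) :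
    R = 0 ∧ ∀ k, S k = 0 := by
  induction n generalizing R S with
  | zero => exact ⟨hRn, hSn⟩
  | succ n ih =>
    obtain ⟨hR', hS'⟩ := h.traceVanishes_pderiv_last hγ hU hR hS
    obtain ⟨hdR, hdS⟩ := ih hRn hSn h.pderiv_last hR' hS'
    exact ⟨hR.eq_zero_of_pderiv_last_eq_zero hU hne hdR,
      fun k => (hS k).eq_zero_of_pderiv_last_eq_zero hU hne (hdS k)⟩

theorem eq_zero_of_traceVanishes {U : Set (Fin d → ℝ)} {a : ℝ} (hγ : γ ≠ 0) (hU : IsOpen U)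
    (hne : U.Nonempty) (h : IsWaveSolution γ R S) (hR : TraceVanishes U a R)
    (hS : ∀ k, TraceVanishes U a (S k)) : R = 0 ∧ ∀ k, S k = 0 := by
  set n := degreeOf (Fin.last d) R + ∑ k, degreeOf (Fin.last d) (S k) + 1
  refine h.eq_zero_of_iterate_pderiv_last_eq_zero hγ hU hne n
    (iterate_pderiv_eq_zero_of_degreeOf_lt (by omega)) (fun k => ?_) hR hS
  have := Finset.single_le_sum (f := fun k => degreeOf (Fin.last d) (S k))
    (fun _ _ => Nat.zero_le _) (Finset.mem_univ k)
  exact iterate_pderiv_eq_zero_of_degreeOf_lt (by omega)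

end IsWaveSolution

section Slab

variable {K U : Set (Fin d → ℝ)} {a b : ℝ}

theorem isWaveSolution_of_pde (hK : IsOpen K) (hKne : K.Nonempty) (hab : a < b) {γ : ℝ}
    {v : (Fin d → ℝ) → ℝ → ℝ} {σ : (Fin d → ℝ) → ℝ → Fin d → ℝ}
    {P : MvPolynomial (Fin (d + 1)) ℝ} {Q : Fin d → MvPolynomial (Fin (d + 1)) ℝ}
    (hrep : ∀ x ∈ K, ∀ s ∈ Set.Ioo a b, v x s = eval (Fin.snoc x s) P ∧
      ∀ k, σ x s k = eval (Fin.snoc x s) (Q k))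
    (hPDE1 : ∀ x ∈ K, ∀ s ∈ Set.Ioo a b, ∀ k : Fin d,
      fderiv ℝ (fun y => v y s) x (Pi.single k 1) + deriv (fun r => σ x r k) s = 0)
    (hPDE2 : ∀ x ∈ K, ∀ s ∈ Set.Ioo a b,
      (∑ k : Fin d, fderiv ℝ (fun y => σ y s k) x (Pi.single k 1))
        + γ * deriv (fun r => v x r) s = 0) :
    IsWaveSolution γ P Q := by
  have hvx (s) (hs : s ∈ Set.Ioo a b) {x} (hx : x ∈ K) (k : Fin d) :=
    fderiv_apply_single_of_eqOn_eval_snoc hK (fun y hy => (hrep y hy s hs).1) hx k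
  have hσx (s) (hs : s ∈ Set.Ioo a b) {x} (hx : x ∈ K) (k : Fin d) :=
    fderiv_apply_single_of_eqOn_eval_snoc hK (fun y hy => (hrep y hy s hs).2 k) hx k
  have hvt {x} (hx : x ∈ K) {s} (hs : s ∈ Set.Ioo a b) :=
    deriv_of_eqOn_eval_snoc isOpen_Ioo (fun r hr => (hrep x hx r hr).1) hs
  have hσt {x} (hx : x ∈ K) (k : Fin d) {s} (hs : s ∈ Set.Ioo a b) :=
    deriv_of_eqOn_eval_snoc isOpen_Ioo (fun r hr => (hrep x hx r hr).2 k) hs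
  refine ⟨fun k => ?_, ?_⟩ <;>
    refine eq_zero_of_eval_snoc_eq_zero hK isOpen_Ioo hKne (Set.nonempty_Ioo.2 hab)
      fun x hx s hs => ?_
  · simpa [← hvx s hs hx, ← hσt hx k hs] using hPDE1 x hx s hs k
  · simpa [← hσx s hs hx, ← hvt hx hs] using hPDE2 x hx s hs

theorem traceVanishes_of_tendsto (hUK : U ⊆ K) (hab : a < b) {g : (Fin d → ℝ) → ℝ → ℝ}
    {P : MvPolynomial (Fin (d + 1)) ℝ}
    (hg : ∀ x ∈ K, ∀ s ∈ Set.Ioo a b, g x s = eval (Fin.snoc x s) P)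
    (hlim : ∀ x ∈ U, Tendsto (fun s => g x s) (𝓝[>] a) (𝓝 0)) : TraceVanishes U a P :=
  fun x hx => tendsto_nhds_unique
    ((hasDerivAt_eval_snoc P x a).continuousAt.tendsto.mono_left nhdsWithin_le_nhds)
    ((hlim x hx).congr' (eventually_of_mem (Ioo_mem_nhdsGT hab) (hg x (hUK hx))))

theorem eq_zero_of_pde_of_tendsto (hK : IsOpen K) (hU : IsOpen U) (hUne : U.Nonempty)
    (hUK : U ⊆ K) (hab : a < b) {γ : ℝ} (hγ : γ ≠ 0)
    {v : (Fin d → ℝ) → ℝ → ℝ} {σ : (Fin d → ℝ) → ℝ → Fin d → ℝ}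
    {P : MvPolynomial (Fin (d + 1)) ℝ} {Q : Fin d → MvPolynomial (Fin (d + 1)) ℝ}
    (hrep : ∀ x ∈ K, ∀ s ∈ Set.Ioo a b, v x s = eval (Fin.snoc x s) P ∧
      ∀ k, σ x s k = eval (Fin.snoc x s) (Q k))
    (hPDE1 : ∀ x ∈ K, ∀ s ∈ Set.Ioo a b, ∀ k : Fin d,
      fderiv ℝ (fun y => v y s) x (Pi.single k 1) + deriv (fun r => σ x r k) s = 0)
    (hPDE2 : ∀ x ∈ K, ∀ s ∈ Set.Ioo a b,
      (∑ k : Fin d, fderiv ℝ (fun y => σ y s k) x (Pi.single k 1))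
        + γ * deriv (fun r => v x r) s = 0)
    (hv : ∀ x ∈ U, Tendsto (fun s => v x s) (𝓝[>] a) (𝓝 0))
    (hσ : ∀ x ∈ U, ∀ k, Tendsto (fun s => σ x s k) (𝓝[>] a) (𝓝 0)) :
    ∀ x ∈ K, ∀ s ∈ Set.Ioo a b, v x s = 0 ∧ σ x s = 0 := by
  obtain ⟨hP, hQ⟩ := (isWaveSolution_of_pde hK (hUne.mono hUK) hab hrep hPDE1 hPDE2
    ).eq_zero_of_traceVanishes hγ hU hUne
    (traceVanishes_of_tendsto hUK hab (fun x hx s hs => (hrep x hx s hs).1) hv)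
    (fun k => traceVanishes_of_tendsto hUK hab (fun x hx s hs => (hrep x hx s hs).2 k)
      fun x hx => hσ x hx k)
  intro x hx s hs
  obtain ⟨hvP, hσQ⟩ := hrep x hx s hs
  exact ⟨by simp [hvP, hP], funext fun k => by simp [hσQ k, hQ k]⟩

end Slab

theorem tendsto_nhdsGT_zero_of_eventuallyEq_zero_nhdsLT {f : ℝ → ℝ} {t L : ℝ}
    (hl : Tendsto f (𝓝[<] t) (𝓝 L)) (hr : Tendsto f (𝓝[>] t) (𝓝 L)) (h0 : f =ᶠ[𝓝[<] t] 0) :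
    Tendsto f (𝓝[>] t) (𝓝 0) := by
  obtain rfl : L = 0 := tendsto_nhds_unique hl (tendsto_const_nhds.congr' h0.symm)
  exact hr

theorem Fin.snoc_fin_two {α : Type*} (x : Fin 2 → α) (s : α) :
    (Fin.snoc x s : Fin 3 → α) = ![x 0, x 1, s] := by
  ext i; fin_cases i <;> rfl

theorem discrete_uniqueness_homogeneous_general
    (Ω : Set (Fin 2 → ℝ))
    (N : ℕ) (t : ℕ → ℝ) (ht0 : t 0 = 0)
    (htmono : ∀ n < N, t n < t (n + 1))
    (ι : Type)
    (Kx : ℕ → ι → Set (Fin 2 → ℝ))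
    (hKopen : ∀ n i, IsOpen (Kx n i))
    (hKsub : ∀ n i, Kx n i ⊆ Ω)
    (hKdense : ∀ n < N, Ω ⊆ closure (⋃ i, Kx n i))
    (c : ℕ → ι → ℝ) (hc : ∀ n i, 0 < c n i)
    (v : (Fin 2 → ℝ) → ℝ → ℝ) (σ : (Fin 2 → ℝ) → ℝ → Fin 2 → ℝ)
    -- elementwise polynomial
    (hpoly : ∀ n < N, ∀ i : ι, ∃ P : MvPolynomial (Fin 3) ℝ,
      ∃ Q : Fin 2 → MvPolynomial (Fin 3) ℝ,
      ∀ x ∈ Kx n i, ∀ s ∈ Set.Ioo (t n) (t (n + 1)),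
        v x s = MvPolynomial.eval ![x 0, x 1, s] P ∧
        ∀ k : Fin 2, σ x s k = MvPolynomial.eval ![x 0, x 1, s] (Q k))
    -- elementwise PDE: ∇v_h + ∂ₜσ_h = 0
    (hPDE1 : ∀ n < N, ∀ i : ι, ∀ x ∈ Kx n i, ∀ s ∈ Set.Ioo (t n) (t (n + 1)), ∀ k : Fin 2,
      fderiv ℝ (fun y => v y s) x (Pi.single k 1) + deriv (fun r => σ x r k) s = 0)
    -- elementwise PDE: ∇·σ_h + c⁻²∂ₜv_h = 0
    (hPDE2 : ∀ n < N, ∀ i : ι, ∀ x ∈ Kx n i, ∀ s ∈ Set.Ioo (t n) (t (n + 1)),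
      (∑ k : Fin 2, fderiv ℝ (fun y => σ y s k) x (Pi.single k 1))
        + ((c n i) ^ 2)⁻¹ * deriv (fun r => v x r) s = 0)
    -- vanishing initial traces (from |(v_h,σ_h)|_DG = 0)
    (hinit : ∀ i : ι, ∀ x ∈ Kx 0 i,
      Tendsto (fun s => v x s) (nhdsWithin 0 (Set.Ioi 0)) (nhds 0) ∧
      ∀ k : Fin 2, Tendsto (fun s => σ x s k) (nhdsWithin 0 (Set.Ioi 0)) (nhds 0))
    -- vanishing time-jumps across the interior space-like interfaces t (n+1)
    (hjump : ∀ n, n + 1 < N → ∀ i j : ι, ∀ x, x ∈ Kx n i → x ∈ Kx (n + 1) j →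
      ((∃ L : ℝ, Tendsto (fun s => v x s) (nhdsWithin (t (n + 1)) (Set.Iio (t (n + 1)))) (nhds L)
          ∧ Tendsto (fun s => v x s) (nhdsWithin (t (n + 1)) (Set.Ioi (t (n + 1)))) (nhds L)) ∧
       ∀ k : Fin 2, ∃ L : ℝ,
          Tendsto (fun s => σ x s k) (nhdsWithin (t (n + 1)) (Set.Iio (t (n + 1)))) (nhds L)
          ∧ Tendsto (fun s => σ x s k) (nhdsWithin (t (n + 1)) (Set.Ioi (t (n + 1)))) (nhds L))) :
    ∀ n < N, ∀ i : ι, ∀ x ∈ Kx n i, ∀ s ∈ Set.Ioo (t n) (t (n + 1)),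
      v x s = 0 ∧ σ x s = 0 := by
  simp only [← Fin.snoc_fin_two] at hpoly
  have hγ (n : ℕ) (i : ι) : ((c n i) ^ 2)⁻¹ ≠ 0 := by have := hc n i; positivity
  intro n
  induction n with
  | zero =>
    intro hn i x hx
    obtain ⟨P, Q, hrep⟩ := hpoly 0 hn i
    refine eq_zero_of_pde_of_tendsto (hKopen 0 i) (hKopen 0 i) ⟨x, hx⟩ subset_rfl (htmono 0 hn)
      (hγ 0 i) hrep (hPDE1 0 hn i) (hPDE2 0 hn i) (fun y hy => ?_) (fun y hy k => ?_) x hx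
    · rw [ht0]; exact (hinit i y hy).1
    · rw [ht0]; exact (hinit i y hy).2 k
  | succ n ih =>
    intro hn i x hx
    have hn' : n < N := by omega
    obtain ⟨z, hzi, hz⟩ :=
      mem_closure_iff.1 (hKdense n hn' (hKsub _ _ hx)) _ (hKopen (n + 1) i) hx
    obtain ⟨j, hzj⟩ := Set.mem_iUnion.1 hz
    have hprev : Set.Ioo (t n) (t (n + 1)) ∈ 𝓝[<] t (n + 1) := Ioo_mem_nhdsLT (htmono n hn')
    obtain ⟨P, Q, hrep⟩ := hpoly (n + 1) hn i
    refine eq_zero_of_pde_of_tendsto (hKopen (n + 1) i) ((hKopen n j).inter (hKopen (n + 1) i))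
      ⟨z, hzj, hzi⟩ Set.inter_subset_right (htmono _ hn) (hγ _ i) hrep (hPDE1 _ hn i)
      (hPDE2 _ hn i) (fun y hy => ?_) (fun y hy k => ?_) x hx
    · obtain ⟨⟨L, hl, hr⟩, -⟩ := hjump n hn j i y hy.1 hy.2
      exact tendsto_nhdsGT_zero_of_eventuallyEq_zero_nhdsLT hl hr
        (eventually_of_mem hprev fun s hs => (ih hn' j y hy.1 s hs).1)
    · obtain ⟨L, hl, hr⟩ := (hjump n hn j i y hy.1 hy.2).2 k
      exact tendsto_nhdsGT_zero_of_eventuallyEq_zero_nhdsLT hl hr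
        (eventually_of_mem hprev fun s hs => congrFun (ih hn' j y hy.1 s hs).2 k)

/-- Uniqueness for the homogeneous discrete problem: an elementwise-polynomial field
`(v_h, σ_h)` on a prismatic space–time mesh of `Q = Ω × (0,T)` whose DG seminorm vanishes
(all time-jumps across interior space-like interfaces vanish, spatial jumps of `v_h` vanish,
the Dirichlet trace of `v_h` vanishes on `Γ_D`, and the initial traces vanish) and which
solves the first-order wave system `∇v_h + ∂ₜσ_h = 0`, `∇·σ_h + c⁻²∂ₜv_h = 0` in each
element, is identically zero in `Q`.

The mesh is encoded by strictly increasing time nodes `t 0 = 0 < t 1 < … < t N = T`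
and, for each time slab `n`, a finite family `Kx n i` of pairwise disjoint open spatial
elements contained in `Ω` whose union is dense in `Ω`; the wave speed `c n i > 0` is
constant on each element; elementwise-polynomial means that on each space–time element
`Kx n i × (t n, t (n+1))` the fields agree with (multivariate) polynomials. -/
theorem discrete_uniqueness_homogeneous
    (Ω : Set (Fin 2 → ℝ)) (hΩ : IsOpen Ω)
    (N : ℕ) (hN : 0 < N) (t : ℕ → ℝ) (ht0 : t 0 = 0)
    (htmono : ∀ n < N, t n < t (n + 1))
    (ι : Type) [Fintype ι]
    (Kx : ℕ → ι → Set (Fin 2 → ℝ))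
    (hKopen : ∀ n i, IsOpen (Kx n i))
    (hKsub : ∀ n i, Kx n i ⊆ Ω)
    (hKdisj : ∀ n, ∀ i j, i ≠ j → Disjoint (Kx n i) (Kx n j))
    (hKdense : ∀ n < N, Ω ⊆ closure (⋃ i, Kx n i))
    (c : ℕ → ι → ℝ) (hc : ∀ n i, 0 < c n i)
    (v : (Fin 2 → ℝ) → ℝ → ℝ) (σ : (Fin 2 → ℝ) → ℝ → Fin 2 → ℝ)
    -- elementwise polynomial
    (hpoly : ∀ n < N, ∀ i : ι, ∃ P : MvPolynomial (Fin 3) ℝ,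
      ∃ Q : Fin 2 → MvPolynomial (Fin 3) ℝ,
      ∀ x ∈ Kx n i, ∀ s ∈ Set.Ioo (t n) (t (n + 1)),
        v x s = MvPolynomial.eval ![x 0, x 1, s] P ∧
        ∀ k : Fin 2, σ x s k = MvPolynomial.eval ![x 0, x 1, s] (Q k))
    -- elementwise PDE: ∇v_h + ∂ₜσ_h = 0
    (hPDE1 : ∀ n < N, ∀ i : ι, ∀ x ∈ Kx n i, ∀ s ∈ Set.Ioo (t n) (t (n + 1)), ∀ k : Fin 2,
      fderiv ℝ (fun y => v y s) x (Pi.single k 1) + deriv (fun r => σ x r k) s = 0)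
    -- elementwise PDE: ∇·σ_h + c⁻²∂ₜv_h = 0
    (hPDE2 : ∀ n < N, ∀ i : ι, ∀ x ∈ Kx n i, ∀ s ∈ Set.Ioo (t n) (t (n + 1)),
      (∑ k : Fin 2, fderiv ℝ (fun y => σ y s k) x (Pi.single k 1))
        + ((c n i) ^ 2)⁻¹ * deriv (fun r => v x r) s = 0)
    -- vanishing initial traces (from |(v_h,σ_h)|_DG = 0)
    (hinit : ∀ i : ι, ∀ x ∈ Kx 0 i,
      Tendsto (fun s => v x s) (nhdsWithin 0 (Set.Ioi 0)) (nhds 0) ∧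
      ∀ k : Fin 2, Tendsto (fun s => σ x s k) (nhdsWithin 0 (Set.Ioi 0)) (nhds 0))
    -- vanishing time-jumps across the interior space-like interfaces t (n+1)
    (hjump : ∀ n, n + 1 < N → ∀ i j : ι, ∀ x, x ∈ Kx n i → x ∈ Kx (n + 1) j →
      ((∃ L : ℝ, Tendsto (fun s => v x s) (nhdsWithin (t (n + 1)) (Set.Iio (t (n + 1)))) (nhds L)
          ∧ Tendsto (fun s => v x s) (nhdsWithin (t (n + 1)) (Set.Ioi (t (n + 1)))) (nhds L)) ∧
       ∀ k : Fin 2, ∃ L : ℝ,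
          Tendsto (fun s => σ x s k) (nhdsWithin (t (n + 1)) (Set.Iio (t (n + 1)))) (nhds L)
          ∧ Tendsto (fun s => σ x s k) (nhdsWithin (t (n + 1)) (Set.Ioi (t (n + 1)))) (nhds L)))
    -- vanishing spatial jumps of v_h across time-like interior faces
    (hspace : ∀ n < N, ∀ s ∈ Set.Ioo (t n) (t (n + 1)), ContinuousOn (fun y => v y s) Ω)
    -- vanishing Dirichlet trace of v_h on Γ_D ⊆ ∂Ω
    (ΓD : Set (Fin 2 → ℝ)) (hΓD : ΓD ⊆ frontier Ω)
    (hDir : ∀ x ∈ ΓD, ∀ n < N, ∀ s ∈ Set.Ioo (t n) (t (n + 1)),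
      Tendsto (fun y => v y s) (nhdsWithin x Ω) (nhds 0)) :
    ∀ n < N, ∀ i : ι, ∀ x ∈ Kx n i, ∀ s ∈ Set.Ioo (t n) (t (n + 1)),
      v x s = 0 ∧ σ x s = 0 :=
  discrete_uniqueness_homogeneous_general Ω N t ht0 htmono ι Kx hKopen hKsub hKdense c hc v σ hpoly
    hPDE1 hPDE2 hinit hjump
end
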